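/- For every n ∈ ℕ and every real ξ > 0, ∫_{−1}^{1} Pₙ(s)/(cosh ξ − s)^{3/2} ds = (2√2/ sinh ξ) · e^{−(n+1/2)ξ}. -/

import Mathlib

/-!
For `c > 1` and a real polynomial `g`, the polynomial `Q = ∑ₖ aₖ (c - X)ᵏ g⁽ᵏ⁾` with
`aₖ = 2²ᵏ⁺¹ k! / (2k)!` solves `(c - X) Q' + Q / 2 = g`, so `Q(s) / √(c - s)` is a primitive of
`g(s) / (c - s)^{3/2}`. By Rodrigues' formula the integral is the difference of the endpoint values
`Q(±1) / √(c ∓ 1)` for `g = dⁿ/dsⁿ (s² - 1)ⁿ`. For `t = ±1` we have `(s² - 1)ⁿ = (s - t)ⁿ (s + t)ⁿ`,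
so `g⁽ᵏ⁾(t) = (n+k)! (n choose k) (2t)ⁿ⁻ᵏ` and `Q(t) = 2ⁿ⁺¹ n! tⁿ bₙ(2t(c - t))`, where
`bₙ(z) = ∑ₖ (n+k choose 2k) zᵏ` is the Morgan–Voyce polynomial. With `c = cosh ξ = (x + x⁻¹) / 2`,
`x = e^{-ξ}`, its argument is `y + y⁻¹ - 2` for `y = t x`, and the recurrences of `bₙ` and its
companion `Bₙ` give `(1 + y) yⁿ bₙ = y²ⁿ⁺¹ + 1`.
-/

/-- The degree-`n` Legendre polynomial, via Rodrigues' formula. -/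
noncomputable def legendreP (n : ℕ) (s : ℝ) : ℝ :=
  (1 : ℝ) / (2 ^ n * (n.factorial : ℝ)) *
    iteratedDeriv n (fun x : ℝ => (x ^ 2 - 1) ^ n) s

open Polynomial Finset
open scoped Nat

lemma Polynomial.iteratedDeriv_eval (p : ℝ[X]) (k : ℕ) :
    iteratedDeriv k (fun x => p.eval x) = fun x => (derivative^[k] p).eval x := by
  induction k with
  | zero => simp
  | succ k ih =>
    rw [iteratedDeriv_succ, ih]
    ext x
    rw [Function.iterate_succ_apply']
    exact Polynomial.deriv _

lemma legendreP_eq_eval (n : ℕ) (s : ℝ) :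
    legendreP n s = (derivative^[n] ((X ^ 2 - 1 : ℝ[X]) ^ n)).eval s / (2 ^ n * n !) := by
  have hw : (fun x : ℝ => (x ^ 2 - 1) ^ n) = fun x => ((X ^ 2 - 1 : ℝ[X]) ^ n).eval x := by
    simp
  rw [legendreP, hw, iteratedDeriv_eval, one_div_mul_eq_div]

noncomputable def primitiveNumeratorCoeff (k : ℕ) : ℝ := 2 ^ (2 * k + 1) * k ! / (2 * k)!

lemma primitiveNumeratorCoeff_zero : primitiveNumeratorCoeff 0 = 2 := by
  simp [primitiveNumeratorCoeff]

lemma primitiveNumeratorCoeff_succ (k : ℕ) :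
    (1 / 2 - (k + 1 : ℝ)) * primitiveNumeratorCoeff (k + 1) = -primitiveNumeratorCoeff k := by
  rw [primitiveNumeratorCoeff, primitiveNumeratorCoeff, show 2 * (k + 1) = 2 * k + 1 + 1 by ring,
    Nat.factorial_succ, Nat.factorial_succ, Nat.factorial_succ]
  push_cast
  field_simp
  ring

noncomputable def primitiveNumerator (c : ℝ) (g : ℝ[X]) : ℝ[X] :=
  ∑ k ∈ range (g.natDegree + 1),
    C (primitiveNumeratorCoeff k) * (C c - X) ^ k * derivative^[k] g

lemma C_sub_X_mul_derivative_pow (c : ℝ) (k : ℕ) :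
    (C c - X) * derivative ((C c - X) ^ k) = -C (k : ℝ) * (C c - X) ^ k := by
  cases k with
  | zero => simp
  | succ k =>
    rw [derivative_pow, derivative_sub, derivative_C, derivative_X, pow_succ, Nat.add_sub_cancel]
    ring

theorem C_sub_X_mul_derivative_primitiveNumerator_add (c : ℝ) (g : ℝ[X]) :
    (C c - X) * derivative (primitiveNumerator c g) + C (1 / 2) * primitiveNumerator c g = g := by
  set W : ℕ → ℝ[X] := fun k =>
    C ((1 / 2 - k) * primitiveNumeratorCoeff k) * (C c - X) ^ k * derivative^[k] g
  have hterm : ∀ k,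
      (C c - X) * derivative (C (primitiveNumeratorCoeff k) * (C c - X) ^ k * derivative^[k] g)
        + C (1 / 2) * (C (primitiveNumeratorCoeff k) * (C c - X) ^ k * derivative^[k] g)
        = W k - W (k + 1) := by
    intro k
    have hcoeff : C (1 / 2) * C (primitiveNumeratorCoeff (k + 1))
        - C ((k : ℝ) + 1) * C (primitiveNumeratorCoeff (k + 1)) = -C (primitiveNumeratorCoeff k) := by
      rw [← map_mul, ← map_mul, ← map_sub, ← sub_mul, primitiveNumeratorCoeff_succ, map_neg]
    simp only [W, Nat.cast_succ, derivative_mul, derivative_C, zero_mul, zero_add,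
      ← Function.iterate_succ_apply' derivative, map_mul, map_sub]
    linear_combination (C (primitiveNumeratorCoeff k) * derivative^[k] g)
        * C_sub_X_mul_derivative_pow c k
      + ((C c - X) * (C c - X) ^ k * derivative^[k + 1] g) * hcoeff
  rw [primitiveNumerator, derivative_sum, mul_sum, mul_sum, ← sum_add_distrib]
  simp only [hterm]
  rw [sum_range_sub']
  simp only [W, iterate_derivative_eq_zero (Nat.lt_succ_self _), mul_zero, sub_zero]
  simp [primitiveNumeratorCoeff_zero]

lemma rpow_three_halves_eq_mul_sqrt {x : ℝ} (hx : 0 < x) : x ^ (3 / 2 : ℝ) = x * √x := by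
  rw [show (3 / 2 : ℝ) = 1 + 1 / 2 by norm_num, Real.rpow_add hx, Real.rpow_one, Real.sqrt_eq_rpow]

theorem hasDerivAt_eval_div_sqrt {Q g : ℝ[X]} {c : ℝ}
    (hQ : (C c - X) * derivative Q + C (1 / 2) * Q = g) {s : ℝ} (hs : s < c) :
    HasDerivAt (fun t => Q.eval t / √(c - t)) (g.eval s / (c - s) ^ (3 / 2 : ℝ)) s := by
  have hcs : 0 < c - s := sub_pos.mpr hs
  have hsqrt : HasDerivAt (fun t => √(c - t)) (-1 / (2 * √(c - s))) s :=
    ((hasDerivAt_id s).const_sub c).sqrt hcs.ne'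
  refine ((Q.hasDerivAt s).div hsqrt (Real.sqrt_pos.mpr hcs).ne').congr_deriv ?_
  have hg := congrArg (eval s) hQ
  simp only [eval_add, eval_mul, eval_sub, eval_C, eval_X] at hg
  rw [rpow_three_halves_eq_mul_sqrt hcs, ← hg]
  field_simp
  rw [Real.sq_sqrt hcs.le]
  ring

theorem integral_eval_div_rpow_three_halves {Q g : ℝ[X]} {c : ℝ}
    (hQ : (C c - X) * derivative Q + C (1 / 2) * Q = g) {a b : ℝ} (ha : a < c) (hb : b < c) :
    ∫ s in a..b, g.eval s / (c - s) ^ (3 / 2 : ℝ) = Q.eval b / √(c - b) - Q.eval a / √(c - a) := by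
  have hlt : ∀ s ∈ Set.uIcc a b, s < c := fun s hs => hs.2.trans_lt (max_lt ha hb)
  refine intervalIntegral.integral_eq_sub_of_hasDerivAt
    (fun s hs => hasDerivAt_eval_div_sqrt hQ (hlt s hs)) (ContinuousOn.intervalIntegrable ?_)
  refine g.continuous.continuousOn.div ?_
    fun s hs => (Real.rpow_pos_of_pos (sub_pos.mpr (hlt s hs)) _).ne'
  exact (continuous_const.sub continuous_id).continuousOn.rpow_const
    fun s hs => Or.inl (sub_pos.mpr (hlt s hs)).ne'

lemma eval_primitiveNumerator {g : ℝ[X]} {N : ℕ} (hN : g.natDegree ≤ N) (c t : ℝ) :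
    (primitiveNumerator c g).eval t
      = ∑ k ∈ range (N + 1), primitiveNumeratorCoeff k * (c - t) ^ k * (derivative^[k] g).eval t := by
  simp only [primitiveNumerator, eval_finsetSum, eval_mul, eval_C, eval_pow, eval_sub, eval_X]
  refine sum_subset (range_subset_range.mpr (by omega)) fun k hkN hk => ?_
  rw [iterate_derivative_eq_zero (by simp only [mem_range] at hkN hk; omega), eval_zero, mul_zero]

lemma choose_mul_factorial_add_mul_factorial {n k : ℕ} (hk : k ≤ n) :
    n.choose k * (n + k)! * k ! = n ! * (n + k).choose (2 * k) * (2 * k)! := by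
  have h1 := Nat.choose_mul_factorial_mul_factorial hk
  have h2 := Nat.choose_mul_factorial_mul_factorial (show 2 * k ≤ n + k by omega)
  rw [show n + k - 2 * k = n - k by omega] at h2
  apply Nat.eq_of_mul_eq_mul_right (Nat.factorial_pos (n - k))
  calc n.choose k * (n + k)! * k ! * (n - k)! = (n.choose k * k ! * (n - k)!) * (n + k)! := by ring
    _ = n ! * ((n + k).choose (2 * k) * (2 * k)! * (n - k)!) := by rw [h1, h2]
    _ = n ! * (n + k).choose (2 * k) * (2 * k)! * (n - k)! := by ring

section CommRing

variable {R : Type*} [CommRing R]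

lemma X_sub_C_pow_mul_X_sub_C_pow_eq_sum (a b : R) (n : ℕ) :
    (X - C a) ^ n * (X - C b) ^ n
      = ∑ j ∈ range (n + 1), C ((n.choose j : R) * (a - b) ^ (n - j)) * (X - C a) ^ (n + j) := by
  rw [show X - C b = (X - C a) + C (a - b) by rw [map_sub]; ring, add_pow, mul_sum]
  refine sum_congr rfl fun j _ => ?_
  rw [C_mul, map_natCast, map_pow, pow_add]
  ring

lemma eval_iterate_derivative_X_sub_C_pow_mul_X_sub_C_pow (a b : R) {n k : ℕ} (hk : k ≤ n) :
    (derivative^[n + k] ((X - C a) ^ n * (X - C b) ^ n)).eval a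
      = (n + k)! * n.choose k * (a - b) ^ (n - k) := by
  rw [X_sub_C_pow_mul_X_sub_C_pow_eq_sum, iterate_derivative_sum, eval_finsetSum,
    sum_eq_single_of_mem k (mem_range.mpr (Nat.lt_succ_of_le hk))]
  · rw [iterate_derivative_C_mul, iterate_derivative_X_sub_pow, Nat.descFactorial_self]
    simp only [map_mul, map_natCast, map_pow, map_sub, tsub_self, pow_zero, nsmul_eq_mul, mul_one,
      eval_mul, eval_natCast, eval_pow, eval_sub, eval_C]
    ring
  · intro j _ hjk
    rw [iterate_derivative_C_mul, iterate_derivative_X_sub_pow]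
    rcases lt_or_gt_of_ne hjk with h | h
    · simp [Nat.descFactorial_eq_zero_iff_lt.mpr (by omega : n + j < n + k)]
    · simp [zero_pow (by omega : n + j - (n + k) ≠ 0)]

def morganVoyceb (n : ℕ) (z : R) : R := ∑ k ∈ range (n + 1), ((n + k).choose (2 * k) : R) * z ^ k

def morganVoyceB (n : ℕ) (z : R) : R :=
  ∑ k ∈ range (n + 1), ((n + k + 1).choose (2 * k + 1) : R) * z ^ k

lemma morganVoyceb_succ (n : ℕ) (z : R) :
    morganVoyceb (n + 1) z = morganVoyceb n z + z * morganVoyceB n z := by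
  have hb : morganVoyceb n z =
      ∑ k ∈ range (n + 1), ((n + k + 1).choose (2 * k + 2) : R) * z ^ (k + 1) + 1 := by
    rw [morganVoyceb, sum_range_succ', sum_range_succ _ n,
      Nat.choose_eq_zero_of_lt (by omega : n + n + 1 < 2 * n + 2)]
    simp [Nat.add_assoc, mul_add]
  have hshift : ∑ k ∈ range (n + 1), ((n + k + 1).choose (2 * k + 1) : R) * z ^ (k + 1) =
      z * morganVoyceB n z := by
    rw [morganVoyceB, mul_sum]
    exact sum_congr rfl fun k _ => by ring
  have hpascal : ∀ k : ℕ, ((n + 1 + (k + 1)).choose (2 * (k + 1)) : R) =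
      (n + k + 1).choose (2 * k + 1) + (n + k + 1).choose (2 * k + 2) := fun k => by
    rw [show n + 1 + (k + 1) = n + k + 1 + 1 by ring, show 2 * (k + 1) = 2 * k + 1 + 1 by ring,
      Nat.choose_succ_succ]
    push_cast; ring
  rw [morganVoyceb, sum_range_succ', hb, ← hshift]
  simp only [hpascal, add_mul, sum_add_distrib, add_zero, mul_zero, Nat.choose_zero_right,
    Nat.cast_one, pow_zero, mul_one]
  ring

lemma morganVoyceB_succ (n : ℕ) (z : R) :
    morganVoyceB (n + 1) z = morganVoyceB n z + morganVoyceb (n + 1) z := by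
  have hpascal : ∀ k : ℕ, ((n + 1 + k + 1).choose (2 * k + 1) : R) =
      (n + k + 1).choose (2 * k + 1) + (n + 1 + k).choose (2 * k) := fun k => by
    rw [show n + 1 + k + 1 = n + k + 1 + 1 by ring, Nat.choose_succ_succ,
      show n + 1 + k = n + k + 1 by ring]
    push_cast; ring
  rw [morganVoyceB, morganVoyceb]
  simp only [hpascal, add_mul, sum_add_distrib]
  rw [sum_range_succ (fun k => ((n + k + 1).choose (2 * k + 1) : R) * z ^ k) (n + 1),
    Nat.choose_eq_zero_of_lt (by omega : n + (n + 1) + 1 < 2 * (n + 1) + 1)]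
  simp [morganVoyceB]

lemma morganVoyce_closed_form (n : ℕ) {y z : R} (hz : y * z = (1 - y) ^ 2) :
    (1 + y) * y ^ n * morganVoyceb n z = y ^ (2 * n + 1) + 1 ∧
      (1 - y ^ 2) * y ^ n * morganVoyceB n z = 1 - y ^ (2 * n + 2) := by
  induction n with
  | zero =>
    simp only [pow_zero, mul_one, morganVoyceb, zero_add, range_one, sum_singleton, mul_zero,
      Nat.choose_self, Nat.cast_one, pow_one, morganVoyceB, and_true]
    ring
  | succ n ih =>
    obtain ⟨hb, hB⟩ := ih
    have hb' : (1 + y) * y ^ (n + 1) * morganVoyceb (n + 1) z = y ^ (2 * (n + 1) + 1) + 1 := by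
      rw [morganVoyceb_succ]
      linear_combination y * hb + (1 - y) * hB + (1 + y) * y ^ n * morganVoyceB n z * hz
    refine ⟨hb', ?_⟩
    rw [morganVoyceB_succ]
    linear_combination y * hB + (1 - y) * hb'

end CommRing

lemma eval_primitiveNumerator_legendre (n : ℕ) (c : ℝ) {t : ℝ} (ht : t ^ 2 = 1) :
    (primitiveNumerator c (derivative^[n] ((X ^ 2 - 1) ^ n))).eval t
      = 2 ^ (n + 1) * n ! * t ^ n * morganVoyceb n (2 * t * (c - t)) := by
  have hdeg : (derivative^[n] ((X ^ 2 - 1 : ℝ[X]) ^ n)).natDegree ≤ n := by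
    refine (natDegree_iterate_derivative _ _).trans ?_
    have : ((X ^ 2 - 1 : ℝ[X]) ^ n).natDegree ≤ 2 * n := by compute_degree; omega
    omega
  have hw : (X ^ 2 - 1 : ℝ[X]) ^ n = (X - C t) ^ n * (X - C (-t)) ^ n := by
    have hCt : C t ^ 2 = 1 := by rw [← C_pow, ht, C_1]
    rw [← mul_pow, map_neg]
    congr 1
    linear_combination hCt
  rw [eval_primitiveNumerator hdeg, morganVoyceb, mul_sum]
  refine sum_congr rfl fun k hk => ?_
  have hkn : k ≤ n := Nat.lt_succ_iff.mp (mem_range.mp hk)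
  rw [← Function.iterate_add_apply, add_comm, hw,
    eval_iterate_derivative_X_sub_C_pow_mul_X_sub_C_pow _ _ hkn]
  have hfact : (n.choose k : ℝ) * (n + k)! * k ! = n ! * (n + k).choose (2 * k) * (2 * k)! := by
    exact_mod_cast choose_mul_factorial_add_mul_factorial hkn
  have hpow : (2 * t) ^ (n - k) * 2 ^ (2 * k + 1) = 2 ^ (n + 1) * t ^ n * (2 * t) ^ k := by
    have h2k : (2 * t) ^ (2 * k) = 2 ^ (2 * k) := by rw [pow_mul, mul_pow, ht, mul_one, ← pow_mul]
    calc (2 * t) ^ (n - k) * 2 ^ (2 * k + 1) = 2 * (2 * t) ^ (n - k + 2 * k) := by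
          rw [pow_add _ (n - k), h2k]; ring
      _ = 2 ^ (n + 1) * t ^ n * (2 * t) ^ k := by
          rw [show n - k + 2 * k = n + k by omega, pow_add, mul_pow]; ring
  rw [primitiveNumeratorCoeff, sub_neg_eq_add, ← two_mul, mul_pow (2 * t), div_mul_eq_mul_div,
    div_mul_eq_mul_div, div_eq_iff (by positivity)]
  linear_combination (c - t) ^ k * (2 * t) ^ (n - k) * 2 ^ (2 * k + 1) * hfact
    + (c - t) ^ k * n ! * (n + k).choose (2 * k) * (2 * k)! * hpow

lemma eval_primitiveNumerator_legendre_div_sqrt (n : ℕ) {x t : ℝ} (hx0 : 0 < x) (hx1 : x < 1)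
    (ht : t ^ 2 = 1) :
    (primitiveNumerator ((x + x⁻¹) / 2) (derivative^[n] ((X ^ 2 - 1) ^ n))).eval t
        / √((x + x⁻¹) / 2 - t)
      = 2 ^ (n + 1) * n ! * √(2 * x) * (t * x ^ (2 * n + 1) + 1) / ((1 - x ^ 2) * x ^ n) := by
  obtain ⟨htx, htx'⟩ : -1 < t * x ∧ t * x < 1 :=
    abs_lt.mp ((sq_lt_one_iff_abs_lt_one _).mp (by rw [mul_pow, ht]; nlinarith))
  have hsqrt : √((x + x⁻¹) / 2 - t) = (1 - t * x) / √(2 * x) := by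
    rw [Real.sqrt_eq_iff_mul_self_eq_of_pos (div_pos (by linarith) (by positivity))]
    field_simp
    rw [Real.sq_sqrt (by positivity)]
    linear_combination 2 * x ^ 3 * ht
  obtain ⟨hb, -⟩ := morganVoyce_closed_form n (y := t * x) (z := 2 * t * ((x + x⁻¹) / 2 - t))
    (by field_simp; linear_combination (1 - 2 * t * x) * ht)
  have htodd : t ^ (2 * n + 1) = t := by rw [pow_succ, pow_mul, ht, one_pow, one_mul]
  rw [mul_pow, mul_pow, htodd] at hb
  rw [eval_primitiveNumerator_legendre n _ ht, hsqrt,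
    show 1 - x ^ 2 = (1 - t * x) * (1 + t * x) by linear_combination x ^ 2 * ht,
    div_div_eq_mul_div, div_eq_div_iff (by linarith)
      (mul_ne_zero (mul_ne_zero (by linarith) (by linarith)) (pow_ne_zero _ hx0.ne'))]
  linear_combination 2 ^ (n + 1) * n ! * √(2 * x) * (1 - t * x) * hb

theorem integral_legendreP_div_rpow_three_halves (n : ℕ) {x : ℝ} (hx0 : 0 < x) (hx1 : x < 1) :
    ∫ s in (-1 : ℝ)..1, legendreP n s / ((x + x⁻¹) / 2 - s) ^ (3 / 2 : ℝ)
      = 4 * √(2 * x) * x ^ (n + 1) / (1 - x ^ 2) := by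
  have hc : 1 < (x + x⁻¹) / 2 := by
    have h : (x + x⁻¹) / 2 - 1 = (1 - x) ^ 2 / (2 * x) := by field_simp; ring
    have : 0 < (1 - x) ^ 2 / (2 * x) := div_pos (pow_pos (sub_pos.mpr hx1) 2) (by linarith)
    linarith
  simp only [legendreP_eq_eval, div_right_comm _ (2 ^ n * (n ! : ℝ))]
  rw [intervalIntegral.integral_div,
    integral_eval_div_rpow_three_halves (C_sub_X_mul_derivative_primitiveNumerator_add _ _)
      (by linarith) (by linarith),
    eval_primitiveNumerator_legendre_div_sqrt n hx0 hx1 (by norm_num),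
    eval_primitiveNumerator_legendre_div_sqrt n hx0 hx1 (by norm_num)]
  have : 0 < 1 - x ^ 2 := by nlinarith
  field_simp
  ring

theorem legendre_integral_pow_three_halves (n : ℕ) (ξ : ℝ) (hξ : 0 < ξ) :
    ∫ s in (-1 : ℝ)..1, legendreP n s / (Real.cosh ξ - s) ^ (3 / 2 : ℝ) =
      2 * Real.sqrt 2 / Real.sinh ξ * Real.exp (-(n + 1 / 2) * ξ) := by
  set x := Real.exp (-ξ) with hx
  have hx0 : 0 < x := Real.exp_pos _
  have hx1 : x < 1 := Real.exp_lt_one_iff.mpr (by linarith)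
  have hexp : Real.exp ξ = x⁻¹ := by rw [hx, Real.exp_neg, inv_inv]
  have hcosh : Real.cosh ξ = (x + x⁻¹) / 2 := by rw [Real.cosh_eq, hexp, ← hx, add_comm]
  have hsinh : Real.sinh ξ = (x⁻¹ - x) / 2 := by rw [Real.sinh_eq, hexp, ← hx]
  have hdecay : Real.exp (-(n + 1 / 2) * ξ) = x ^ n * √x := by
    rw [hx, ← Real.exp_nat_mul, ← Real.exp_half, ← Real.exp_add]
    ring_nf
  rw [hcosh, integral_legendreP_div_rpow_three_halves n hx0 hx1, hsinh, hdecay,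
    Real.sqrt_mul zero_le_two]
  have : 0 < 1 - x ^ 2 := by nlinarith
  field_simp
  ring
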